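/- For every nonempty coalition S ⊆ N, the subgame of the RS-game (N₀, v) with player set S₀ = S ∪ {0} is balanced: there exists x ∈ ℝ^{S₀} with ∑_{i∈S₀} x_i = v(S₀) and ∑_{i∈T} x_i ≥ v(T) for every coalition T ⊆ S₀. -/

import Mathlib

/-!
Give the supplier nothing and every retailer `i` its stand-alone profit `(p_i(q_i^c) - c) q_i^c`
when trading with the supplier at cost price. A coalition containing the supplier earns exactly
the sum of these profits. A coalition `T` of retailers alone pays the wholesale price
`w(q_T) > c`, so each member earns at most what it would earn buying the same quantity at price
`c`, which is at most its optimal stand-alone profit.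
-/

open Finset

/-- An RS-situation with `n` retailers; the supplier is treated separately.
`c` is the unit production cost, `w` the wholesale price function and
`p i` the expected price function of retailer `i`.  All price functions are
decreasing and continuous on `[0, ∞)`, `w` exceeds `c` everywhere,
`p i 0 > w 0` and `p i` reaches the value `c` at some positive quantity. -/
structure RSSituation (n : ℕ) where
  c : ℝ
  w : ℝ → ℝ
  p : Fin n → ℝ → ℝ
  w_anti : ∀ ⦃q q' : ℝ⦄, 0 ≤ q → q ≤ q' → w q' ≤ w q
  w_cont : ContinuousOn w (Set.Ici 0)
  w_gt_c : ∀ q : ℝ, 0 ≤ q → c < w q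
  p_anti : ∀ i : Fin n, ∀ ⦃q q' : ℝ⦄, 0 ≤ q → q ≤ q' → p i q' ≤ p i q
  p_cont : ∀ i : Fin n, ContinuousOn (p i) (Set.Ici 0)
  p_zero_gt : ∀ i : Fin n, w 0 < p i 0
  exists_eq_c : ∀ i : Fin n, ∃ q : ℝ, 0 < q ∧ p i q = c

namespace RSSituation

variable {n : ℕ}

/-- The feasible set `Q^S ⊆ [0,∞)^S` of order vectors for a coalition `S` of retailers. -/
def QSet (R : RSSituation n) (S : Finset (Fin n)) : Set (S → ℝ) :=
  {q | ∀ i : S, 0 ≤ q i ∧ R.w (∑ j : S, q j) ≤ R.p i.1 (q i)}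

/-- The joint profit `∑_{i ∈ S} (p_i(q_i) - w(q_S)) q_i` of a coalition `S` of retailers. -/
def coalProfit (R : RSSituation n) (S : Finset (Fin n)) (q : S → ℝ) : ℝ :=
  ∑ i : S, (R.p i.1 (q i) - R.w (∑ j : S, q j)) * q i

/-- `q` is an optimal order vector for the coalition `S` of retailers. -/
def IsCoalOpt (R : RSSituation n) (S : Finset (Fin n)) (q : S → ℝ) : Prop :=
  q ∈ R.QSet S ∧ ∀ q' ∈ R.QSet S, R.coalProfit S q' ≤ R.coalProfit S q

/-- The feasible set of order quantities of retailer `i` at unit price `c`. -/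
def QcSet (R : RSSituation n) (i : Fin n) : Set ℝ :=
  {q | 0 ≤ q ∧ R.c ≤ R.p i q}

/-- The profit `(p_i(q) - c) q` of retailer `i` at unit price `c`. -/
def indProfit (R : RSSituation n) (i : Fin n) (q : ℝ) : ℝ :=
  (R.p i q - R.c) * q

/-- `q` is an optimal order quantity for retailer `i` at unit price `c`. -/
def IsIndOpt (R : RSSituation n) (i : Fin n) (q : ℝ) : Prop :=
  q ∈ R.QcSet i ∧ ∀ q' ∈ R.QcSet i, R.indProfit i q' ≤ R.indProfit i q

/-- `v` is the RS-game determined by chosen optimal order vectors `qS S`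
(for each retailer coalition `S`) and `qc i` (for each retailer `i`, when
cooperating with the supplier).  Players: `none` is the supplier `0`,
`some i` is retailer `i`. -/
def IsRSGame (R : RSSituation n) (qS : (S : Finset (Fin n)) → (S → ℝ))
    (qc : Fin n → ℝ) (v : Finset (Option (Fin n)) → ℝ) : Prop :=
  v ∅ = 0 ∧ v {none} = 0 ∧
    (∀ S : Finset (Fin n), S.Nonempty → v (S.image some) = R.coalProfit S (qS S)) ∧
    (∀ S : Finset (Fin n), S.Nonempty →
      v (insert none (S.image some)) = ∑ i ∈ S, R.indProfit i (qc i))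

/-- The core of a TU game on the player set `N₀ = Option (Fin n)`. -/
def core (v : Finset (Option (Fin n)) → ℝ) : Set (Option (Fin n) → ℝ) :=
  {x | ∑ i : Option (Fin n), x i = v Finset.univ ∧
    ∀ T : Finset (Option (Fin n)), v T ≤ ∑ i ∈ T, x i}

end RSSituation

namespace RSSituation

variable {n : ℕ} (R : RSSituation n)

theorem coalProfit_le_sum_indProfit {S : Finset (Fin n)} {q : S → ℝ} (hq : q ∈ R.QSet S)
    {qc : Fin n → ℝ} (hqc : ∀ i, R.IsIndOpt i (qc i)) :
    R.coalProfit S q ≤ ∑ i ∈ S, R.indProfit i (qc i) := by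
  have hc : R.c < R.w (∑ j : S, q j) := R.w_gt_c _ (sum_nonneg fun j _ => (hq j).1)
  rw [← sum_coe_sort S]
  refine sum_le_sum fun i _ => ?_
  obtain ⟨hqi, hwp⟩ := hq i
  calc (R.p i (q i) - R.w (∑ j : S, q j)) * q i
      ≤ R.indProfit i (q i) := by
        unfold indProfit
        gcongr
    _ ≤ R.indProfit i (qc i) := (hqc i).2 _ ⟨hqi, hc.le.trans hwp⟩

def standalonePayoff (qc : Fin n → ℝ) (o : Option (Fin n)) : ℝ :=
  o.elim 0 fun i => R.indProfit i (qc i)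

theorem sum_standalonePayoff_image_some (qc : Fin n → ℝ) (U : Finset (Fin n)) :
    ∑ o ∈ U.image some, R.standalonePayoff qc o = ∑ i ∈ U, R.indProfit i (qc i) :=
  sum_image fun _ _ _ _ h => Option.some_injective _ h

theorem sum_standalonePayoff_insert_none (qc : Fin n → ℝ) (U : Finset (Fin n)) :
    ∑ o ∈ insert none (U.image some), R.standalonePayoff qc o =
      ∑ i ∈ U, R.indProfit i (qc i) := by
  rw [sum_insert (by simp), sum_standalonePayoff_image_some]
  simp [standalonePayoff]

namespace IsRSGame

variable {R} {qS : (S : Finset (Fin n)) → (S → ℝ)} {qc : Fin n → ℝ}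
  {v : Finset (Option (Fin n)) → ℝ}

theorem apply_insert_none (hv : R.IsRSGame qS qc v) (U : Finset (Fin n)) :
    v (insert none (U.image some)) = ∑ o ∈ insert none (U.image some), R.standalonePayoff qc o := by
  rw [sum_standalonePayoff_insert_none]
  rcases U.eq_empty_or_nonempty with rfl | hU
  · simpa using hv.2.1
  · exact hv.2.2.2 U hU

theorem apply_image_some_le (hv : R.IsRSGame qS qc v)
    (hqS : ∀ S : Finset (Fin n), S.Nonempty → R.IsCoalOpt S (qS S))
    (hqc : ∀ i, R.IsIndOpt i (qc i)) (U : Finset (Fin n)) :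
    v (U.image some) ≤ ∑ o ∈ U.image some, R.standalonePayoff qc o := by
  rw [sum_standalonePayoff_image_some]
  rcases U.eq_empty_or_nonempty with rfl | hU
  · simp [hv.1]
  · rw [hv.2.2.1 U hU]
    exact R.coalProfit_le_sum_indProfit (hqS U hU).1 hqc

theorem apply_le_sum_standalonePayoff (hv : R.IsRSGame qS qc v)
    (hqS : ∀ S : Finset (Fin n), S.Nonempty → R.IsCoalOpt S (qS S))
    (hqc : ∀ i, R.IsIndOpt i (qc i)) (T : Finset (Option (Fin n))) :
    v T ≤ ∑ o ∈ T, R.standalonePayoff qc o := by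
  by_cases hT : none ∈ T
  · have hT_eq : T = insert none (T.eraseNone.image some) := by
      rw [image_some_eraseNone, insert_erase hT]
    rw [hT_eq, hv.apply_insert_none]
  · have hT_eq : T = T.eraseNone.image some := by
      rw [image_some_eraseNone, erase_eq_of_notMem hT]
    rw [hT_eq]
    exact hv.apply_image_some_le hqS hqc _

end IsRSGame

end RSSituation

theorem rs_subgame_balanced_general (n : ℕ) (R : RSSituation n)
    (qS : (S : Finset (Fin n)) → (S → ℝ)) (qc : Fin n → ℝ)
    (hqS : ∀ S : Finset (Fin n), S.Nonempty → R.IsCoalOpt S (qS S))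
    (hqc : ∀ i : Fin n, R.IsIndOpt i (qc i))
    (v : Finset (Option (Fin n)) → ℝ) (hv : R.IsRSGame qS qc v)
    (S : Finset (Fin n)) :
    ∃ x : Option (Fin n) → ℝ,
      ∑ i ∈ insert none (S.image some), x i = v (insert none (S.image some)) ∧
      ∀ T ⊆ insert none (S.image some), v T ≤ ∑ i ∈ T, x i :=
  ⟨R.standalonePayoff qc, (hv.apply_insert_none S).symm,
    fun T _ => hv.apply_le_sum_standalonePayoff hqS hqc T⟩

/-- For every nonempty coalition `S` of retailers, the subgame of the RS-game
with player set `S₀ = S ∪ {0}` is balanced. -/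
theorem rs_subgame_balanced (n : ℕ) (R : RSSituation n)
    (qS : (S : Finset (Fin n)) → (S → ℝ)) (qc : Fin n → ℝ)
    (hqS : ∀ S : Finset (Fin n), S.Nonempty → R.IsCoalOpt S (qS S))
    (hqc : ∀ i : Fin n, R.IsIndOpt i (qc i))
    (v : Finset (Option (Fin n)) → ℝ) (hv : R.IsRSGame qS qc v)
    (S : Finset (Fin n)) (hS : S.Nonempty) :
    ∃ x : Option (Fin n) → ℝ,
      ∑ i ∈ insert none (S.image some), x i = v (insert none (S.image some)) ∧
      ∀ T ⊆ insert none (S.image some), v T ≤ ∑ i ∈ T, x i :=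
  rs_subgame_balanced_general n R qS qc hqS hqc v hv S
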